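/- Let m ≥ 1, let K be a finite index set of clusters, and for each k let Σ_k be a positive definite real m×m matrix, μ_k ∈ ℝ^m, and c_k > 0 a real number. Let x ∈ ℝ^m satisfy x ≠ μ_k for every k. For positive definite matrices S_k write Q_k(S) = (x − μ_k)ᵀ S_k^(−1) (x − μ_k). Then for any fixed k and j, the inequality log(Q_j(Σ)/Q_k(Σ)) ≥ (1/m)·log(det Σ_k / det Σ_j) holds if and only if log(Q_j(cΣ)/Q_k(cΣ)) ≥ (1/m)·log(det(c_k Σ_k) / det(c_j Σ_j)) holds, where (cΣ)_k = c_k Σ_k. Consequently, the FEMDA decision rule is unchanged when each dispersion matrix Σ_k is rescaled by an arbitrary positive factor c_k. -/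

import Mathlib

open Matrix

/-! Rescaling `Σ_k ↦ c_k Σ_k` divides `Q_k` by `c_k` and multiplies `det Σ_k` by `c_k ^ m`.
Hence both sides of the decision inequality for the pair `(j, k)` are shifted by the same
amount `log (c_k / c_j)`: on the left because the log turns the ratio of factors into a sum,
on the right because the `m`-th power is undone by the factor `1 / m`. -/

namespace Matrix

variable {n K : Type*} [Fintype n] [DecidableEq n] [Field K]

theorem smul_inv₀ (c : K) (A : Matrix n n K) : (c • A)⁻¹ = c⁻¹ • A⁻¹ := by
  rcases eq_or_ne c 0 with rfl | hc
  · simp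
  by_cases hA : IsUnit A.det
  · exact inv_smul' A (Units.mk0 c hc) hA
  · have hcA : ¬IsUnit (c • A).det := by
      simpa [det_smul, isUnit_iff_ne_zero, hc] using hA
    rw [nonsing_inv_apply_not_isUnit _ hA, nonsing_inv_apply_not_isUnit _ hcA, smul_zero]

theorem dotProduct_smul_inv_mulVec (c : K) (A : Matrix n n K) (v : n → K) :
    v ⬝ᵥ ((c • A)⁻¹ *ᵥ v) = c⁻¹ * (v ⬝ᵥ (A⁻¹ *ᵥ v)) := by
  rw [smul_inv₀, smul_mulVec, dotProduct_smul, smul_eq_mul]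

theorem PosDef.dotProduct_inv_mulVec_pos {A : Matrix n n ℝ} (hA : A.PosDef) {v : n → ℝ}
    (hv : v ≠ 0) : 0 < v ⬝ᵥ (A⁻¹ *ᵥ v) := by
  simpa using hA.inv.dotProduct_mulVec_pos hv

end Matrix

namespace Real

theorem log_inv_mul_div_inv_mul {a b p q : ℝ} (ha : a ≠ 0) (hb : b ≠ 0) (hp : p ≠ 0)
    (hq : q ≠ 0) : log (b⁻¹ * q / (a⁻¹ * p)) = log (a / b) + log (q / p) := by
  rw [← log_mul (div_ne_zero ha hb) (div_ne_zero hq hp)]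
  congr 1
  field_simp

theorem one_div_mul_log_pow_mul_div_pow_mul {a b d e : ℝ} {m : ℕ} (hm : m ≠ 0) (ha : a ≠ 0)
    (hb : b ≠ 0) (hd : d ≠ 0) (he : e ≠ 0) :
    1 / (m : ℝ) * log (a ^ m * d / (b ^ m * e)) = log (a / b) + 1 / (m : ℝ) * log (d / e) := by
  have hab : (a / b) ^ m ≠ 0 := pow_ne_zero _ (div_ne_zero ha hb)
  rw [mul_div_mul_comm, ← div_pow, log_mul hab (div_ne_zero hd he), log_pow]
  field_simp

end Real

theorem femda_rule_scale_invariant_general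
    (m : ℕ) (hm : 1 ≤ m) (K : Type*)
    (S : K → Matrix (Fin m) (Fin m) ℝ) (hS : ∀ k, (S k).PosDef)
    (μ : K → (Fin m → ℝ)) (c : K → ℝ) (hc : ∀ k, 0 < c k)
    (x : Fin m → ℝ) (hx : ∀ k, x ≠ μ k) (k j : K) :
    (Real.log (((x - μ j) ⬝ᵥ ((S j)⁻¹ *ᵥ (x - μ j))) /
          ((x - μ k) ⬝ᵥ ((S k)⁻¹ *ᵥ (x - μ k)))) ≥
        (1 / (m : ℝ)) * Real.log ((S k).det / (S j).det)) ↔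
    (Real.log (((x - μ j) ⬝ᵥ ((c j • S j)⁻¹ *ᵥ (x - μ j))) /
          ((x - μ k) ⬝ᵥ ((c k • S k)⁻¹ *ᵥ (x - μ k)))) ≥
        (1 / (m : ℝ)) * Real.log ((c k • S k).det / (c j • S j).det)) := by
  have hQ (i : K) : (x - μ i) ⬝ᵥ ((S i)⁻¹ *ᵥ (x - μ i)) ≠ 0 :=
    ((hS i).dotProduct_inv_mulVec_pos (sub_ne_zero.mpr (hx i))).ne'
  have hdet (i : K) : (S i).det ≠ 0 := (hS i).det_pos.ne'
  rw [dotProduct_smul_inv_mulVec, dotProduct_smul_inv_mulVec, det_smul, det_smul,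
    Fintype.card_fin,
    Real.log_inv_mul_div_inv_mul (hc k).ne' (hc j).ne' (hQ k) (hQ j),
    Real.one_div_mul_log_pow_mul_div_pow_mul (by omega) (hc k).ne' (hc j).ne' (hdet k) (hdet j),
    ge_iff_le, ge_iff_le, add_le_add_iff_left]

/-- FEMDA decision-rule scale invariance: rescaling each dispersion matrix `S k`
by an arbitrary positive factor `c k` leaves each decision inequality, hence the
whole decision rule, unchanged. -/
theorem femda_rule_scale_invariant
    (m : ℕ) (hm : 1 ≤ m) (K : Type*) [Fintype K]
    (S : K → Matrix (Fin m) (Fin m) ℝ) (hS : ∀ k, (S k).PosDef)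
    (μ : K → (Fin m → ℝ)) (c : K → ℝ) (hc : ∀ k, 0 < c k)
    (x : Fin m → ℝ) (hx : ∀ k, x ≠ μ k) (k j : K) :
    (Real.log (((x - μ j) ⬝ᵥ ((S j)⁻¹ *ᵥ (x - μ j))) /
          ((x - μ k) ⬝ᵥ ((S k)⁻¹ *ᵥ (x - μ k)))) ≥
        (1 / (m : ℝ)) * Real.log ((S k).det / (S j).det)) ↔
    (Real.log (((x - μ j) ⬝ᵥ ((c j • S j)⁻¹ *ᵥ (x - μ j))) /
          ((x - μ k) ⬝ᵥ ((c k • S k)⁻¹ *ᵥ (x - μ k)))) ≥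
        (1 / (m : ℝ)) * Real.log ((c k • S k).det / (c j • S j).det)) :=
  femda_rule_scale_invariant_general m hm K S hS μ c hc x hx k j
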